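/- Witness-independence in GL_h: for any ordinary unimodal formula A and any two witnesses u, v for A (assignments of numbers to box occurrences, outer boxes receiving strictly larger numbers than all numbers in their scope), GL_h proves A(u) → A(v), where A(w) ∈ L∞ replaces each box by □n for its witnessed number n. -/
import Mathlib


/-- Poly-modal formulas with modalities `□n` for `n : ℕ`. -/
inductive Fm : Type
  | atom : ℕ → Fm
  | bot  : Fm
  | and  : Fm → Fm → Fm
  | or   : Fm → Fm → Fm
  | imp  : Fm → Fm → Fm
  | neg  : Fm → Fm
  | box  : ℕ → Fm → Fm
  deriving DecidableEq

def Fm.top : Fm := Fm.neg Fm.bot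

/-- `i` occurs as a modality index in the formula. -/
def occursBox (i : ℕ) : Fm → Prop
  | .atom _ => False
  | .bot => False
  | .and A B => occursBox i A ∨ occursBox i B
  | .or A B => occursBox i A ∨ occursBox i B
  | .imp A B => occursBox i A ∨ occursBox i B
  | .neg A => occursBox i A
  | .box n A => i = n ∨ occursBox i A

/-- `n` is strictly greater than every modality index occurring in `A`
    (the paper's "`n > r(A)`"). -/
def BoxLt (A : Fm) (n : ℕ) : Prop := ∀ i, occursBox i A → i < n

/-- The language `L∞`: each box index strictly exceeds all box indices in its scope. -/
inductive Linf : Fm → Prop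
  | atom (k : ℕ) : Linf (.atom k)
  | bot : Linf .bot
  | and {A B : Fm} : Linf A → Linf B → Linf (.and A B)
  | or {A B : Fm} : Linf A → Linf B → Linf (.or A B)
  | imp {A B : Fm} : Linf A → Linf B → Linf (.imp A B)
  | neg {A : Fm} : Linf A → Linf (.neg A)
  | box {A : Fm} (n : ℕ) : Linf A → BoxLt A n → Linf (.box n A)

/-- Boolean evaluation treating atoms and boxed formulas as propositional atoms. -/
def evalWith (v : Fm → Bool) : Fm → Bool
  | .atom k => v (.atom k)
  | .bot => false
  | .and A B => evalWith v A && evalWith v B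
  | .or A B => evalWith v A || evalWith v B
  | .imp A B => !(evalWith v A) || evalWith v B
  | .neg A => !(evalWith v A)
  | .box n A => v (.box n A)

/-- Classical propositional tautologies (on `L∞`-formulas as atoms). -/
def Taut (A : Fm) : Prop := ∀ v, evalWith v A = true

def axH (F : Fm) : Prop := ∃ A n, Linf (Fm.box n A) ∧ F = (Fm.box n A).imp (Fm.box (n+1) A)
def axK (F : Fm) : Prop := ∃ A B n, Linf (Fm.box n (A.imp B)) ∧
    F = (Fm.box n (A.imp B)).imp ((Fm.box n A).imp (Fm.box n B))
def axFour (F : Fm) : Prop := ∃ A n, Linf (Fm.box n A) ∧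
    F = (Fm.box n A).imp (Fm.box (n+1) (Fm.box n A))
def axD (F : Fm) : Prop := ∃ n, F = Fm.neg (Fm.box n Fm.bot)
def axT (F : Fm) : Prop := ∃ A n, Linf (Fm.box n A) ∧ F = (Fm.box n A).imp A
def axL (F : Fm) : Prop := ∃ A n, Linf (Fm.box n A) ∧
    F = (Fm.box (n+1) ((Fm.box n A).imp A)).imp (Fm.box n A)
def axFive (F : Fm) : Prop := ∃ A n, Linf (Fm.box n A) ∧
    F = ((Fm.box n A).neg).imp (Fm.box (n+1) ((Fm.box n A).neg))

/-- Hilbert-style provability over `L∞` from a set of axiom (schema instances):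
    classical tautologies, modus ponens, and necessitation restricted to `n > r(A)`. -/
inductive Prv (Ax : Fm → Prop) : Fm → Prop
  | ax {A : Fm} : Ax A → Prv Ax A
  | taut {A : Fm} : Linf A → Taut A → Prv Ax A
  | mp {A B : Fm} : Prv Ax (A.imp B) → Prv Ax A → Prv Ax B
  | nec {A : Fm} (n : ℕ) : Prv Ax A → BoxLt A n → Prv Ax (Fm.box n A)

def K4hAx (F : Fm) : Prop := axH F ∨ axK F ∨ axFour F
def KD4hAx (F : Fm) : Prop := K4hAx F ∨ axD F
def S4hAx (F : Fm) : Prop := K4hAx F ∨ axT F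
def GLhAx (F : Fm) : Prop := K4hAx F ∨ axL F
def KD45hAx (F : Fm) : Prop := KD4hAx F ∨ axFive F

def K4h : Fm → Prop := Prv K4hAx
def KD4h : Fm → Prop := Prv KD4hAx
def S4h : Fm → Prop := Prv S4hAx
def GLh : Fm → Prop := Prv GLhAx

def conjList (l : List Fm) : Fm := l.foldr Fm.and Fm.top
def disjList (l : List Fm) : Fm := l.foldr Fm.or Fm.bot

/-- `Γ ⊢_L A` : some finite conjunction of members of `Γ` implies `A` in `L`. -/
def Deriv (Ax : Fm → Prop) (Γ : Set Fm) (A : Fm) : Prop :=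
  ∃ l : List Fm, (∀ B ∈ l, B ∈ Γ) ∧ Prv Ax ((conjList l).imp A)

/-- Ordinary unimodal formulas. -/
inductive UFm : Type
  | atom : ℕ → UFm
  | bot : UFm
  | and : UFm → UFm → UFm
  | or : UFm → UFm → UFm
  | imp : UFm → UFm → UFm
  | neg : UFm → UFm
  | box : UFm → UFm
  deriving DecidableEq

/-- The forgetful translation `f`: sends `□n` to `□`. An `L∞` formula `B` with
    `forget B = A` is exactly a witnessed version `A(w)` of `A`. -/
def forget : Fm → UFm
  | .atom k => .atom k
  | .bot => .bot
  | .and A B => (forget A).and (forget B)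
  | .or A B => (forget A).or (forget B)
  | .imp A B => (forget A).imp (forget B)
  | .neg A => (forget A).neg
  | .box _ A => UFm.box (forget A)

def uevalWith (v : UFm → Bool) : UFm → Bool
  | .atom k => v (.atom k)
  | .bot => false
  | .and A B => uevalWith v A && uevalWith v B
  | .or A B => uevalWith v A || uevalWith v B
  | .imp A B => !(uevalWith v A) || uevalWith v B
  | .neg A => !(uevalWith v A)
  | .box A => v (.box A)

def UTaut (A : UFm) : Prop := ∀ v, uevalWith v A = true

/-- Ordinary unimodal Gödel–Löb provability logic `GL`. -/
inductive GLu : UFm → Prop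
  | taut {A} : UTaut A → GLu A
  | axK (A B : UFm) : GLu ((UFm.box (A.imp B)).imp ((UFm.box A).imp (UFm.box B)))
  | axFour (A : UFm) : GLu ((UFm.box A).imp (UFm.box (UFm.box A)))
  | axLob (A : UFm) : GLu ((UFm.box ((UFm.box A).imp A)).imp (UFm.box A))
  | mp {A B} : GLu (A.imp B) → GLu A → GLu B
  | nec {A} : GLu A → GLu (UFm.box A)

def conjU (l : List UFm) : UFm := l.foldr UFm.and (UFm.neg UFm.bot)

/-- `Γ ⊢_{GL} A`. -/
def DerivU (Γ : Set UFm) (A : UFm) : Prop :=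
  ∃ l : List UFm, (∀ B ∈ l, B ∈ Γ) ∧ GLu ((conjU l).imp A)

section Aux

variable {Ax : Fm → Prop}

lemma boxLt_mono {A : Fm} {n m : ℕ} (h : BoxLt A n) (hnm : n ≤ m) : BoxLt A m :=
  fun i hi => lt_of_lt_of_le (h i hi) hnm

lemma prv_refl {A : Fm} (hA : Linf A) : Prv Ax (A.imp A) :=
  Prv.taut (Linf.imp hA hA)
    (by intro v; simp only [evalWith]; cases evalWith v A <;> rfl)

lemma prv_imp_trans {A B C : Fm} (hA : Linf A) (hB : Linf B) (hC : Linf C)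
    (h1 : Prv Ax (A.imp B)) (h2 : Prv Ax (B.imp C)) : Prv Ax (A.imp C) := by
  have t : Prv Ax ((A.imp B).imp ((B.imp C).imp (A.imp C))) :=
    Prv.taut (Linf.imp (Linf.imp hA hB) (Linf.imp (Linf.imp hB hC) (Linf.imp hA hC)))
      (by intro v; simp only [evalWith];
          cases evalWith v A <;> cases evalWith v B <;> cases evalWith v C <;> rfl)
  exact Prv.mp (Prv.mp t h1) h2

lemma prv_and_cong {A B C D : Fm} (hA : Linf A) (hB : Linf B) (hC : Linf C) (hD : Linf D)
    (h1 : Prv Ax (A.imp C)) (h2 : Prv Ax (B.imp D)) :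
    Prv Ax ((A.and B).imp (C.and D)) := by
  have t : Prv Ax ((A.imp C).imp ((B.imp D).imp ((A.and B).imp (C.and D)))) :=
    Prv.taut (Linf.imp (Linf.imp hA hC) (Linf.imp (Linf.imp hB hD)
        (Linf.imp (Linf.and hA hB) (Linf.and hC hD))))
      (by intro v; simp only [evalWith];
          cases evalWith v A <;> cases evalWith v B <;> cases evalWith v C <;>
            cases evalWith v D <;> rfl)
  exact Prv.mp (Prv.mp t h1) h2

lemma prv_or_cong {A B C D : Fm} (hA : Linf A) (hB : Linf B) (hC : Linf C) (hD : Linf D)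
    (h1 : Prv Ax (A.imp C)) (h2 : Prv Ax (B.imp D)) :
    Prv Ax ((A.or B).imp (C.or D)) := by
  have t : Prv Ax ((A.imp C).imp ((B.imp D).imp ((A.or B).imp (C.or D)))) :=
    Prv.taut (Linf.imp (Linf.imp hA hC) (Linf.imp (Linf.imp hB hD)
        (Linf.imp (Linf.or hA hB) (Linf.or hC hD))))
      (by intro v; simp only [evalWith];
          cases evalWith v A <;> cases evalWith v B <;> cases evalWith v C <;>
            cases evalWith v D <;> rfl)
  exact Prv.mp (Prv.mp t h1) h2

lemma prv_imp_cong {A B C D : Fm} (hA : Linf A) (hB : Linf B) (hC : Linf C) (hD : Linf D)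
    (h1 : Prv Ax (C.imp A)) (h2 : Prv Ax (B.imp D)) :
    Prv Ax ((A.imp B).imp (C.imp D)) := by
  have t : Prv Ax ((C.imp A).imp ((B.imp D).imp ((A.imp B).imp (C.imp D)))) :=
    Prv.taut (Linf.imp (Linf.imp hC hA) (Linf.imp (Linf.imp hB hD)
        (Linf.imp (Linf.imp hA hB) (Linf.imp hC hD))))
      (by intro v; simp only [evalWith];
          cases evalWith v A <;> cases evalWith v B <;> cases evalWith v C <;>
            cases evalWith v D <;> rfl)
  exact Prv.mp (Prv.mp t h1) h2

lemma prv_neg_cong {A C : Fm} (hA : Linf A) (hC : Linf C)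
    (h1 : Prv Ax (C.imp A)) : Prv Ax ((A.neg).imp (C.neg)) := by
  have t : Prv Ax ((C.imp A).imp ((A.neg).imp (C.neg))) :=
    Prv.taut (Linf.imp (Linf.imp hC hA) (Linf.imp (Linf.neg hA) (Linf.neg hC)))
      (by intro v; simp only [evalWith]; cases evalWith v A <;> cases evalWith v C <;> rfl)
  exact Prv.mp t h1

end Aux

section GLhLemmas

lemma glh_box_mono {A B : Fm} (k : ℕ) (hA : Linf A) (hB : Linf B)
    (hkA : BoxLt A k) (hkB : BoxLt B k) (h : GLh (A.imp B)) :
    GLh ((Fm.box k A).imp (Fm.box k B)) := by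
  have hlt : BoxLt (A.imp B) k := by
    intro i hi; rcases hi with hi | hi
    · exact hkA i hi
    · exact hkB i hi
  have h1 : GLh (Fm.box k (A.imp B)) := Prv.nec k h hlt
  have h2 : GLh ((Fm.box k (A.imp B)).imp ((Fm.box k A).imp (Fm.box k B))) :=
    Prv.ax (Or.inl (Or.inr (Or.inl ⟨A, B, k, Linf.box k (Linf.imp hA hB) hlt, rfl⟩)))
  exact Prv.mp h2 h1

lemma glh_box_up {A : Fm} {n : ℕ} (hA : Linf A) (hn : BoxLt A n) :
    GLh ((Fm.box n A).imp (Fm.box (n+1) A)) :=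
  Prv.ax (Or.inl (Or.inl ⟨A, n, Linf.box n hA hn, rfl⟩))

lemma glh_box_down {A : Fm} {n : ℕ} (hA : Linf A) (hn : BoxLt A n) :
    GLh ((Fm.box (n+1) A).imp (Fm.box n A)) := by
  have hbnA : Linf (Fm.box n A) := Linf.box n hA hn
  -- ⊢ A → (□n A → A)
  have t1 : GLh (A.imp ((Fm.box n A).imp A)) :=
    Prv.taut (Linf.imp hA (Linf.imp hbnA hA))
      (by intro v; simp only [evalWith];
          cases evalWith v A <;> cases v (Fm.box n A) <;> rfl)
  have hlt1 : BoxLt (A.imp ((Fm.box n A).imp A)) (n+1) := by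
    intro i hi
    rcases hi with hi | (hi | hi) | hi
    · exact Nat.lt_succ_of_lt (hn i hi)
    · omega
    · exact Nat.lt_succ_of_lt (hn i hi)
    · exact Nat.lt_succ_of_lt (hn i hi)
  have t2 : GLh (Fm.box (n+1) (A.imp ((Fm.box n A).imp A))) := Prv.nec (n+1) t1 hlt1
  have t3 : GLh ((Fm.box (n+1) (A.imp ((Fm.box n A).imp A))).imp
      ((Fm.box (n+1) A).imp (Fm.box (n+1) ((Fm.box n A).imp A)))) :=
    Prv.ax (Or.inl (Or.inr (Or.inl
      ⟨A, (Fm.box n A).imp A, n+1, Linf.box (n+1) (Linf.imp hA (Linf.imp hbnA hA)) hlt1, rfl⟩)))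
  have t4 : GLh ((Fm.box (n+1) A).imp (Fm.box (n+1) ((Fm.box n A).imp A))) :=
    Prv.mp t3 t2
  have hltL : BoxLt ((Fm.box n A).imp A) (n+1) := by
    intro i hi
    rcases hi with (hi | hi) | hi
    · omega
    · exact Nat.lt_succ_of_lt (hn i hi)
    · exact Nat.lt_succ_of_lt (hn i hi)
  have t5 : GLh ((Fm.box (n+1) ((Fm.box n A).imp A)).imp (Fm.box n A)) :=
    Prv.ax (Or.inr ⟨A, n, hbnA, rfl⟩)
  exact prv_imp_trans (Linf.box (n+1) hA (boxLt_mono hn (Nat.le_succ n)))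
    (Linf.box (n+1) (Linf.imp hbnA hA) hltL) hbnA t4 t5

lemma glh_box_change {A : Fm} (hA : Linf A) :
    ∀ n m : ℕ, BoxLt A n → BoxLt A m → GLh ((Fm.box n A).imp (Fm.box m A)) := by
  intro n m hn hm
  rcases le_total n m with h | h
  · induction m, h using Nat.le_induction with
    | base => exact prv_refl (Linf.box n hA hn)
    | succ m hnm ih =>
        have hm' : BoxLt A m := boxLt_mono hn hnm
        exact prv_imp_trans (Linf.box n hA hn) (Linf.box m hA hm')
          (Linf.box (m+1) hA hm) (ih hm') (glh_box_up hA hm')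
  · induction n, h using Nat.le_induction with
    | base => exact prv_refl (Linf.box m hA hm)
    | succ n hmn ih =>
        have hn' : BoxLt A n := boxLt_mono hm hmn
        exact prv_imp_trans (Linf.box (n+1) hA hn) (Linf.box n hA hn')
          (Linf.box m hA hm) (glh_box_down hA hn') (ih hn')

end GLhLemmas

lemma glh_main : ∀ u v : Fm, Linf u → Linf v → forget u = forget v →
    GLh (u.imp v) ∧ GLh (v.imp u) := by
  intro u
  induction u with
  | atom k =>
      intro v hu hv h
      cases v <;> simp only [forget, UFm.atom.injEq, reduceCtorEq] at h <;> try exact h.elim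
      · subst h
        exact ⟨prv_refl (Linf.atom k), prv_refl (Linf.atom k)⟩
  | bot =>
      intro v hu hv h
      cases v <;> simp only [forget, reduceCtorEq] at h <;> try exact h.elim
      · exact ⟨prv_refl Linf.bot, prv_refl Linf.bot⟩
  | and A B ihA ihB =>
      intro v hu hv h
      cases hu with | and huA huB =>
      cases v <;> simp only [forget, UFm.and.injEq, reduceCtorEq] at h <;> try exact h.elim
      case and C D =>
        cases hv with | and hvC hvD =>
        obtain ⟨h1, h2⟩ := h
        obtain ⟨hAC, hCA⟩ := ihA C huA hvC h1
        obtain ⟨hBD, hDB⟩ := ihB D huB hvD h2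
        exact ⟨prv_and_cong huA huB hvC hvD hAC hBD,
               prv_and_cong hvC hvD huA huB hCA hDB⟩
  | or A B ihA ihB =>
      intro v hu hv h
      cases hu with | or huA huB =>
      cases v <;> simp only [forget, UFm.or.injEq, reduceCtorEq] at h <;> try exact h.elim
      case or C D =>
        cases hv with | or hvC hvD =>
        obtain ⟨h1, h2⟩ := h
        obtain ⟨hAC, hCA⟩ := ihA C huA hvC h1
        obtain ⟨hBD, hDB⟩ := ihB D huB hvD h2
        exact ⟨prv_or_cong huA huB hvC hvD hAC hBD,
               prv_or_cong hvC hvD huA huB hCA hDB⟩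
  | imp A B ihA ihB =>
      intro v hu hv h
      cases hu with | imp huA huB =>
      cases v <;> simp only [forget, UFm.imp.injEq, reduceCtorEq] at h <;> try exact h.elim
      case imp C D =>
        cases hv with | imp hvC hvD =>
        obtain ⟨h1, h2⟩ := h
        obtain ⟨hAC, hCA⟩ := ihA C huA hvC h1
        obtain ⟨hBD, hDB⟩ := ihB D huB hvD h2
        exact ⟨prv_imp_cong huA huB hvC hvD hCA hBD,
               prv_imp_cong hvC hvD huA huB hAC hDB⟩
  | neg A ihA =>
      intro v hu hv h
      cases hu with | neg huA =>
      cases v <;> simp only [forget, UFm.neg.injEq, reduceCtorEq] at h <;> try exact h.elim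
      case neg C =>
        cases hv with | neg hvC =>
        obtain ⟨hAC, hCA⟩ := ihA C huA hvC h
        exact ⟨prv_neg_cong huA hvC hCA, prv_neg_cong hvC huA hAC⟩
  | box n A ihA =>
      intro v hu hv h
      cases hu with | box _ huA hun =>
      cases v <;> simp only [forget, UFm.box.injEq, reduceCtorEq] at h <;> try exact h.elim
      case box m C =>
        cases hv with | box _ hvC hvm =>
        obtain ⟨hAC, hCA⟩ := ihA C huA hvC h
        set k := max n m with hk
        have hAk : BoxLt A k := boxLt_mono hun (le_max_left n m)
        have hCk : BoxLt C k := boxLt_mono hvm (le_max_right n m)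
        constructor
        · exact prv_imp_trans (Linf.box n huA hun) (Linf.box k huA hAk)
            (Linf.box m hvC hvm)
            (glh_box_change huA n k hun hAk)
            (prv_imp_trans (Linf.box k huA hAk) (Linf.box k hvC hCk)
              (Linf.box m hvC hvm)
              (glh_box_mono k huA hvC hAk hCk hAC)
              (glh_box_change hvC k m hCk hvm))
        · exact prv_imp_trans (Linf.box m hvC hvm) (Linf.box k hvC hCk)
            (Linf.box n huA hun)
            (glh_box_change hvC m k hvm hCk)
            (prv_imp_trans (Linf.box k hvC hCk) (Linf.box k huA hAk)
              (Linf.box n huA hun)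
              (glh_box_mono k hvC huA hCk hAk hCA)
              (glh_box_change huA k n hAk hun))

/-- witness-independence in `GL_h`: for any two witnessed versions
    `u, v ∈ L∞` of a unimodal formula `A`, `GL_h ⊢ A(u) → A(v)`. -/
theorem GLh_witness_independence (A : UFm) (u v : Fm)
    (hu : Linf u) (hv : Linf v)
    (hfu : forget u = A) (hfv : forget v = A) :
    GLh (u.imp v) := by
  exact (glh_main u v hu hv (by rw [hfu, hfv])).1
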